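/- Let d ≥ 1 be an integer, U an open subset of ℝ^d, and L_1, …, L_r linear partial differential operators on U with continuous coefficients. Then the following are equivalent: (1) for every real polynomial p ∈ ℝ[x_1, …, x_d], the functions L_1p, …, L_rp (restrictions of the operators applied to p, viewed as continuous functions on U) are linearly dependent in C(U); (2) L_1, …, L_r are linearly dependent, i.e. there exist real numbers c_1, …, c_r, not all zero, such that c_1L_1 + ⋯ + c_rL_r is the zero operator. -/

import Mathlib

/-- The partial derivative of `f : ℝ^d → ℝ` in the `i`-th coordinate direction. -/
noncomputable def pderivFun {d : ℕ} (i : Fin d) (f : (Fin d → ℝ) → ℝ) :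
    (Fin d → ℝ) → ℝ :=
  fun x => fderiv ℝ f x (Pi.single i 1)

/-- The iterated partial derivative `D^α f = ∂^|α| f / (∂x_1)^{α_1} ⋯ (∂x_d)^{α_d}`. -/
noncomputable def Dmulti {d : ℕ} (α : Fin d → ℕ) (f : (Fin d → ℝ) → ℝ) :
    (Fin d → ℝ) → ℝ :=
  (List.finRange d).foldr (fun i g => (pderivFun i)^[α i] g) f

/-- The action of the linear partial differential operator
`L = ∑_{α, |α| ≤ s} a_α D^α` (with coefficient family `a`) on a function `φ`. -/
noncomputable def pdoApply {d : ℕ} (s : ℕ) (a : (Fin d → ℕ) → (Fin d → ℝ) → ℝ)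
    (φ : (Fin d → ℝ) → ℝ) : (Fin d → ℝ) → ℝ :=
  fun x => ∑ α ∈ Fintype.piFinset (fun _ : Fin d => Finset.range (s + 1)),
    a α x * Dmulti α φ x

/-!
If no nontrivial combination of the coefficient families vanishes, the functions
`(α, x) ↦ a_i α x` are linearly independent, so some `r` pairs `(β_k, x_k)` give a nonsingular
matrix `(a_i β_k (x_k))`. Continuity of the coefficients lets us move the points `x_k` apart
without losing nonsingularity. At distinct points the ideals `𝔪_{x_k}^N` are pairwise coprime,
so the Chinese remainder theorem yields a polynomial `p` whose jets are
`D^α p (x_k) = δ_{α β_k}` for every multi-index `α` in the box of `pdoApply`. Then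
`L_i p (x_k) = a_i β_k (x_k)`, and the nonsingular matrix makes the `L_i p` independent.
-/

open MvPolynomial

theorem linearIndependent_iff_exists_det_ne_zero {K X : Type*} [Field K] {n : ℕ}
    {v : Fin n → X → K} :
    LinearIndependent K v ↔ ∃ t : Fin n → X, (Matrix.of fun i k => v i (t k)).det ≠ 0 := by
  refine ⟨fun hv => ?_, fun ⟨t, ht⟩ => Fintype.linearIndependent_iff.mpr fun g hg => ?_⟩
  · set col : X → Fin n → K := fun x i => v i x
    -- a functional killing every column would give a linear relation among the `v i`
    have hspan : Submodule.span K (Set.range col) = ⊤ := by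
      by_contra! hne
      obtain ⟨f, hf, hker⟩ := Submodule.exists_dual_map_eq_bot_of_lt_top hne.lt_top inferInstance
      have hcol : ∀ x, f (col x) = 0 := fun x => by
        rw [← Submodule.mem_bot K, ← hker]
        exact Submodule.mem_map_of_mem (Submodule.subset_span ⟨x, rfl⟩)
      have hc := Fintype.linearIndependent_iff.mp hv (fun i => f (Pi.single i 1))
        (funext fun x => by
          rw [Pi.zero_apply, ← hcol x, pi_eq_sum_univ' (col x), map_sum]
          simp [col, mul_comm])
      exact hf (LinearMap.pi_ext' fun i => LinearMap.ext_ring (by simpa using hc i))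
    have hbasis := Submodule.exists_fun_fin_finrank_span_eq K (Set.range col)
    rw [hspan, finrank_top, Module.finrank_fin_fun] at hbasis
    obtain ⟨b, hb_mem, -, hb_li⟩ := hbasis
    choose t ht using hb_mem
    refine ⟨t, ?_⟩
    rw [← isUnit_iff_ne_zero, ← Matrix.isUnit_iff_isUnit_det,
      ← Matrix.linearIndependent_cols_iff_isUnit]
    have hcols : (Matrix.of fun i k => v i (t k)).col = b := funext fun k => ht k
    rwa [hcols]
  · have := Matrix.eq_zero_of_vecMul_eq_zero ht (v := g) (funext fun k => by
      simpa [Matrix.vecMul, dotProduct] using congrFun hg (t k))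
    simp [this]

section InjectiveTuples

variable {ι E : Type*} [NormedAddCommGroup E] [NormedSpace ℝ E] [Nontrivial E]

theorem dense_setOf_apply_ne {k l : ι} (hkl : k ≠ l) : Dense {z : ι → E | z k ≠ z l} := by
  classical
  let φ : (ι → E) →ₗ[ℝ] E := LinearMap.proj (R := ℝ) (φ := fun _ => E) k - LinearMap.proj l
  have hφ : LinearMap.ker φ ≠ ⊤ := by
    obtain ⟨e, he⟩ := exists_ne (0 : E)
    intro htop
    have : φ (Pi.single k e) = 0 := by rw [← LinearMap.mem_ker, htop]; trivial
    simp [φ, Ne.symm hkl, he] at this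
  have hint : interior (LinearMap.ker φ : Set (ι → E)) = ∅ := by
    by_contra h
    exact hφ (Submodule.eq_top_of_nonempty_interior' _ (Set.nonempty_iff_ne_empty.mpr h))
  have hker : (LinearMap.ker φ : Set (ι → E)) = {z : ι → E | z k ≠ z l}ᶜ := by
    ext z; simp [φ, sub_eq_zero]
  rwa [hker, interior_eq_empty_iff_dense_compl, compl_compl] at hint

theorem dense_setOf_injective [Finite ι] : Dense {z : ι → E | Function.Injective z} := by
  have hinter : {z : ι → E | Function.Injective z} =
      ⋂₀ Set.range fun p : {p : ι × ι // p.1 ≠ p.2} => {z : ι → E | z p.1.1 ≠ z p.1.2} := by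
    ext z
    simp only [Set.mem_ofPred_eq, Set.sInter_range, Set.mem_iInter, Subtype.forall, Prod.forall]
    exact ⟨fun h k l hkl => h.ne hkl, fun h k l => not_imp_not.mp (h k l)⟩
  rw [hinter]
  refine Set.Finite.dense_sInter (Set.finite_range _) ?_ ?_ <;> rintro _ ⟨⟨⟨k, l⟩, hkl⟩, rfl⟩
  · exact isOpen_ne_fun (continuous_apply k) (continuous_apply l)
  · exact dense_setOf_apply_ne hkl

end InjectiveTuples

theorem Derivation.map_mem_pow {R A : Type*} [CommSemiring R] [CommSemiring A] [Algebra R A]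
    (D : Derivation R A A) (I : Ideal A) {n : ℕ} {a : A} (ha : a ∈ I ^ (n + 1)) :
    D a ∈ I ^ n := by
  induction n generalizing a with
  | zero => simp
  | succ n ih =>
    rw [pow_succ'] at ha
    refine Submodule.mul_induction_on ha (fun b hb c hc => ?_) (fun b c hb hc => ?_)
    · rw [D.leibniz, smul_eq_mul, smul_eq_mul]
      exact add_mem (pow_succ' I n ▸ Ideal.mul_mem_mul hb (ih hc)) (Ideal.mul_mem_right _ _ hc)
    · rw [map_add]
      exact add_mem hb hc

theorem Derivation.iterate_map_mem_pow {R A : Type*} [CommSemiring R] [CommSemiring A]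
    [Algebra R A] (D : Derivation R A A) (I : Ideal A) {n k : ℕ} {a : A}
    (ha : a ∈ I ^ (n + k)) : D^[k] a ∈ I ^ n := by
  induction k generalizing a with
  | zero => exact ha
  | succ k ih => exact ih (D.map_mem_pow I ha)

namespace MvPolynomial

variable {d : ℕ}

section IteratedPDeriv

variable {R : Type*} [CommSemiring R]

noncomputable def iteratedPDeriv (α : Fin d → ℕ) :
    MvPolynomial (Fin d) R →ₗ[R] MvPolynomial (Fin d) R :=
  ((List.finRange d).map fun i => (pderiv i).toLinearMap ^ α i).prod

theorem iteratedPDeriv_mem_pow (I : Ideal (MvPolynomial (Fin d) R)) {n : ℕ} {α : Fin d → ℕ}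
    {p : MvPolynomial (Fin d) R} (hp : p ∈ I ^ (n + ∑ j, α j)) :
    iteratedPDeriv α p ∈ I ^ n := by
  rw [Fin.sum_univ_def] at hp
  unfold iteratedPDeriv
  generalize List.finRange d = l at hp ⊢
  induction l generalizing n with
  | nil => simpa using hp
  | cons i l ih =>
    rw [List.map_cons, List.prod_cons, Module.End.mul_apply, Module.End.pow_apply]
    refine (pderiv i).iterate_map_mem_pow I (ih ?_)
    rwa [List.map_cons, List.sum_cons, ← add_assoc] at hp

theorem eval_iteratedPDeriv_eq_zero_of_mem_pow_ker {y : Fin d → R} {N : ℕ} {α : Fin d → ℕ}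
    (hα : ∑ j, α j < N) {p : MvPolynomial (Fin d) R} (hp : p ∈ RingHom.ker (eval y) ^ N) :
    eval y (iteratedPDeriv α p) = 0 := by
  have hp' : p ∈ RingHom.ker (eval y) ^ (1 + ∑ j, α j) :=
    Ideal.pow_le_pow_right (by omega) hp
  simpa using iteratedPDeriv_mem_pow _ hp'

end IteratedPDeriv

section MonomialAt

variable {R : Type*} [CommRing R]

noncomputable def monomialAt (y : Fin d → R) (γ : Fin d → ℕ) : MvPolynomial (Fin d) R :=
  ∏ j, (X j - C (y j)) ^ γ j

theorem eval_monomialAt [Nontrivial R] (y : Fin d → R) (γ : Fin d → ℕ) :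
    eval y (monomialAt y γ) = if γ = 0 then 1 else 0 := by
  split_ifs with hγ
  · simp [monomialAt, hγ]
  · obtain ⟨j, hj⟩ := Function.ne_iff.mp hγ
    simp [monomialAt, Finset.prod_eq_zero (Finset.mem_univ j), zero_pow hj]

theorem pderiv_monomialAt (y : Fin d → R) (γ : Fin d → ℕ) (i : Fin d) :
    pderiv i (monomialAt y γ) = γ i • monomialAt y (Function.update γ i (γ i - 1)) := by
  classical
  have hrest : (∏ j ∈ Finset.univ.erase i, (X j - C (y j)) ^ γ j) =
      ∏ j ∈ Finset.univ.erase i, (X j - C (y j)) ^ (Function.update γ i (γ i - 1)) j :=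
    Finset.prod_congr rfl fun j hj => by rw [Function.update_of_ne (Finset.ne_of_mem_erase hj)]
  have hconst : pderiv i (∏ j ∈ Finset.univ.erase i, (X j - C (y j)) ^ γ j) = 0 := by
    refine Finset.prod_induction _ (fun q => pderiv i q = 0) (fun a b ha hb => ?_) pderiv_one
      fun j hj => ?_
    · simp [ha, hb]
    · simp [pderiv_X, Finset.ne_of_mem_erase hj]
  simp only [monomialAt]
  rw [← Finset.mul_prod_erase _ _ (Finset.mem_univ i),
    ← Finset.mul_prod_erase _ _ (Finset.mem_univ i), Derivation.leibniz, hconst, smul_zero,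
    zero_add, Function.update_self, pderiv_pow]
  simp only [pderiv_X_self, map_sub, pderiv_C, sub_zero, mul_one, nsmul_eq_mul, ← hrest]
  ring

theorem iterate_pderiv_monomialAt (y : Fin d → R) (γ : Fin d → ℕ) (i : Fin d) (n : ℕ) :
    (pderiv i)^[n] (monomialAt y γ) =
      (γ i).descFactorial n • monomialAt y (Function.update γ i (γ i - n)) := by
  induction n with
  | zero => simp
  | succ n ih =>
    rw [Function.iterate_succ_apply', ih, map_nsmul, pderiv_monomialAt, Function.update_self,
      Function.update_idem, smul_smul, Nat.descFactorial_succ, Nat.sub_sub, mul_comm]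

-- `γ - β` truncates, but then the `descFactorial` factor of an overshooting index vanishes.
theorem iteratedPDeriv_monomialAt (y : Fin d → R) (β γ : Fin d → ℕ) :
    iteratedPDeriv β (monomialAt y γ) =
      (∏ j, (γ j).descFactorial (β j)) • monomialAt y (γ - β) := by
  suffices ∀ l : List (Fin d), l.Nodup →
      (l.map fun i => (pderiv i).toLinearMap ^ β i).prod (monomialAt y γ) =
        (l.map fun i => (γ i).descFactorial (β i)).prod •
          monomialAt y (fun j => if j ∈ l then γ j - β j else γ j) by
    rw [iteratedPDeriv, this _ (List.nodup_finRange d), Fin.prod_univ_def]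
    congr 2
    ext j
    simp
  intro l hl
  induction l with
  | nil => simp
  | cons i l ih =>
    obtain ⟨hil, hl⟩ := List.nodup_cons.mp hl
    rw [List.map_cons, List.prod_cons, Module.End.mul_apply, ih hl, map_nsmul,
      Module.End.pow_apply, Derivation.coeFn_coe, iterate_pderiv_monomialAt, if_neg hil, smul_smul,
      List.map_cons, List.prod_cons, mul_comm]
    congr 2
    ext j
    by_cases hj : j = i
    · subst hj; simp [hil]
    · simp [hj]

theorem eval_iteratedPDeriv_monomialAt [Nontrivial R] (y : Fin d → R) (β γ : Fin d → ℕ) :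
    eval y (iteratedPDeriv β (monomialAt y γ)) =
      if β = γ then ((∏ j, (γ j).factorial : ℕ) : R) else 0 := by
  rw [iteratedPDeriv_monomialAt, map_nsmul, eval_monomialAt]
  split_ifs with hzero hβγ hβγ
  · subst hβγ; simp [Nat.descFactorial_self]
  · obtain ⟨j, hj⟩ : ∃ j, γ j < β j := by
      by_contra! h
      exact hβγ (_root_.funext fun j =>
        le_antisymm (h j) (Nat.sub_eq_zero_iff_le.mp (congrFun hzero j)))
    rw [Finset.prod_eq_zero (Finset.mem_univ j) (Nat.descFactorial_eq_zero_iff_lt.mpr hj),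
      zero_smul]
  · subst hβγ; simp at hzero
  · simp

end MonomialAt

theorem isCoprime_ker_eval {K : Type*} [Field K] {y z : Fin d → K} (hyz : y ≠ z) :
    IsCoprime (RingHom.ker (eval y)) (RingHom.ker (eval z)) := by
  have := RingHom.ker_isMaximal_of_surjective (eval y) (fun a => ⟨C a, eval_C a⟩)
  have := RingHom.ker_isMaximal_of_surjective (eval z) (fun a => ⟨C a, eval_C a⟩)
  refine Ideal.isCoprime_of_isMaximal fun h => ?_
  obtain ⟨j, hj⟩ := Function.ne_iff.mp hyz
  have hmem : X j - C (y j) ∈ RingHom.ker (eval y) := by simp [RingHom.mem_ker]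
  rw [h, RingHom.mem_ker] at hmem
  exact hj (by simpa [sub_eq_zero, eq_comm] using hmem)

theorem exists_eval_iteratedPDeriv_eq_ite {K : Type*} [Field K] [CharZero K] {r : ℕ}
    {y : Fin r → Fin d → K} (hy : Function.Injective y) (β : Fin r → Fin d → ℕ) (N : ℕ) :
    ∃ p : MvPolynomial (Fin d) K, ∀ k α, ∑ j, α j < N →
      eval (y k) (iteratedPDeriv α p) = if α = β k then 1 else 0 := by
  have hcop : Pairwise fun k l =>
      IsCoprime (RingHom.ker (eval (y k)) ^ N) (RingHom.ker (eval (y l)) ^ N) :=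
    fun k l hkl => (isCoprime_ker_eval (hy.ne hkl)).pow
  obtain ⟨p, hp⟩ := Ideal.exists_forall_sub_mem_ideal hcop
    fun k => ((∏ j, (β k j).factorial : ℕ) : K)⁻¹ • monomialAt (y k) (β k)
  refine ⟨p, fun k α hα => ?_⟩
  have hjet := eval_iteratedPDeriv_eq_zero_of_mem_pow_ker hα (hp k)
  rw [map_sub, map_sub, sub_eq_zero, map_smul, smul_eval, eval_iteratedPDeriv_monomialAt] at hjet
  rw [hjet]
  split_ifs
  · exact inv_mul_cancel₀ (Nat.cast_ne_zero.mpr (Finset.prod_ne_zero_iff.mpr fun j _ =>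
      Nat.factorial_ne_zero _))
  · simp

theorem hasFDerivAt_eval (p : MvPolynomial (Fin d) ℝ) (x : Fin d → ℝ) :
    HasFDerivAt (fun y : Fin d → ℝ => eval y p)
      (∑ j, eval x (pderiv j p) • ContinuousLinearMap.proj j : (Fin d → ℝ) →L[ℝ] ℝ) x := by
  induction p using MvPolynomial.induction_on with
  | C a =>
    simp only [eval_C, pderiv_C, map_zero, zero_smul, Finset.sum_const_zero]
    exact hasFDerivAt_const a x
  | add p q hp hq =>
    simp only [map_add, add_smul, Finset.sum_add_distrib]
    exact hp.add hq
  | mul_X p j hp =>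
    have hXj : HasFDerivAt (fun y : Fin d → ℝ => y j)
        (ContinuousLinearMap.proj j : (Fin d → ℝ) →L[ℝ] ℝ) x :=
      hasFDerivAt_apply j x
    have hderiv : (∑ i, eval x (pderiv i (p * X j)) • ContinuousLinearMap.proj i
          : (Fin d → ℝ) →L[ℝ] ℝ) =
        eval x p • ContinuousLinearMap.proj j +
          x j • ∑ i, eval x (pderiv i p) • ContinuousLinearMap.proj i := by
      ext v
      simp [pderiv_X, Pi.single_apply, Finset.sum_add_distrib, Finset.mul_sum, add_mul,
        apply_ite, mul_assoc]
    simp only [map_mul, eval_X, hderiv]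
    exact hp.mul hXj

end MvPolynomial

theorem pderivFun_eval {d : ℕ} (i : Fin d) (p : MvPolynomial (Fin d) ℝ) :
    pderivFun i (fun y => eval y p) = fun y => eval y (pderiv i p) := by
  funext x
  rw [pderivFun, (hasFDerivAt_eval p x).fderiv]
  simp [Pi.single_apply]

theorem Dmulti_eval {d : ℕ} (α : Fin d → ℕ) (p : MvPolynomial (Fin d) ℝ) :
    Dmulti α (fun y => eval y p) = fun y => eval y (iteratedPDeriv α p) := by
  have hsemiconj (i : Fin d) :
      Function.Semiconj (fun q y => eval y q) (pderiv i) (pderivFun i) :=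
    fun q => (pderivFun_eval i q).symm
  unfold Dmulti iteratedPDeriv
  induction List.finRange d with
  | nil => rfl
  | cons i l ih =>
    rw [List.foldr_cons, ih, List.map_cons, List.prod_cons, Module.End.mul_apply,
      Module.End.pow_apply, Derivation.coeFn_coe, ((hsemiconj i).iterate_right _).eq]

theorem pdoApply_eval_eq_of_jet {d s : ℕ} {a : (Fin d → ℕ) → (Fin d → ℝ) → ℝ}
    {p : MvPolynomial (Fin d) ℝ} {x : Fin d → ℝ} {β : Fin d → ℕ} (hβ : ∀ j, β j ≤ s)
    (hjet : ∀ α : Fin d → ℕ, (∀ j, α j ≤ s) →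
      eval x (iteratedPDeriv α p) = if α = β then 1 else 0) :
    pdoApply s a (fun y => eval y p) x = a β x := by
  have hbox {α : Fin d → ℕ} :
      α ∈ Fintype.piFinset (fun _ => Finset.range (s + 1)) ↔ ∀ j, α j ≤ s := by
    simp
  simp only [pdoApply, Dmulti_eval]
  rw [Finset.sum_congr rfl fun α hα => by rw [hjet α (hbox.mp hα), mul_ite, mul_one, mul_zero],
    Finset.sum_ite_eq', if_pos (hbox.mpr hβ)]

theorem sum_mul_pdoApply {d r s : ℕ} (a : Fin r → (Fin d → ℕ) → (Fin d → ℝ) → ℝ) (c : Fin r → ℝ)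
    (φ : (Fin d → ℝ) → ℝ) (x : Fin d → ℝ) :
    ∑ i, c i * pdoApply s (a i) φ x = pdoApply s (fun α x => ∑ i, c i * a i α x) φ x := by
  simp only [pdoApply, Finset.mul_sum, Finset.sum_mul, mul_assoc]
  exact Finset.sum_comm

theorem exists_linearIndependent_pdoApply_eval {d r s : ℕ} (hd : 1 ≤ d)
    {U : Set (Fin d → ℝ)} (hU : IsOpen U) {a : Fin r → (Fin d → ℕ) → (Fin d → ℝ) → ℝ}
    (hcont : ∀ i α, ContinuousOn (a i α) U) (hdeg : ∀ i α, s < ∑ j, α j → a i α = 0)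
    (hli : LinearIndependent ℝ fun i (t : (Fin d → ℕ) × U) => a i t.1 t.2) :
    ∃ p : MvPolynomial (Fin d) ℝ,
      LinearIndependent ℝ fun i (x : U) => pdoApply s (a i) (fun y => eval y p) x := by
  obtain ⟨t, ht⟩ := linearIndependent_iff_exists_det_ne_zero.mp hli
  set β := fun k => (t k).1
  have hβ : ∀ k j, β k j ≤ s := by
    intro k j
    by_contra! h
    refine ht (Matrix.det_eq_zero_of_column_eq_zero k fun i => ?_)
    exact congrFun (hdeg i (β k) (h.trans_le (Finset.single_le_sum (fun _ _ => Nat.zero_le _)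
      (Finset.mem_univ j)))) _
  set S := Set.univ.pi (fun _ : Fin r => U) ∩
    {z | (Matrix.of fun i k => a i (β k) (z k)).det ≠ 0}
  have hS : IsOpen S := by
    have hdet : ContinuousOn (fun z : Fin r → Fin d → ℝ =>
        (Matrix.of fun i k => a i (β k) (z k)).det) (Set.univ.pi fun _ => U) :=
      (continuous_id.matrix_det).comp_continuousOn <| continuousOn_pi.mpr fun i =>
        continuousOn_pi.mpr fun k =>
          (hcont i (β k)).comp (continuous_apply k).continuousOn fun z hz => hz k trivial
    exact hdet.isOpen_inter_preimage (isOpen_set_pi Set.finite_univ fun _ _ => hU)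
      isOpen_compl_singleton
  have : Nonempty (Fin d) := ⟨⟨0, hd⟩⟩
  obtain ⟨y, ⟨hyU, hydet⟩, hyinj⟩ := dense_setOf_injective.inter_open_nonempty S hS
    ⟨fun k => (t k).2, fun k _ => (t k).2.2, ht⟩
  obtain ⟨p, hp⟩ := MvPolynomial.exists_eval_iteratedPDeriv_eq_ite hyinj β (d * s + 1)
  have hentry : ∀ i k, pdoApply s (a i) (fun y => eval y p) (y k) = a i (β k) (y k) := by
    refine fun i k => pdoApply_eval_eq_of_jet (hβ k) fun α hα => hp k α ?_
    have := Finset.sum_le_sum fun j (_ : j ∈ Finset.univ) => hα j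
    simp only [Finset.sum_const, Finset.card_univ, Fintype.card_fin, smul_eq_mul] at this
    omega
  refine ⟨p, linearIndependent_iff_exists_det_ne_zero.mpr ⟨fun k => ⟨y k, hyU k trivial⟩, ?_⟩⟩
  simpa only [hentry] using Set.mem_ofPred.mp hydet

theorem not_linearIndependent_pdoApply {d r s : ℕ} {U : Set (Fin d → ℝ)}
    {a : Fin r → (Fin d → ℕ) → (Fin d → ℝ) → ℝ} {c : Fin r → ℝ} (hc : c ≠ 0)
    (hzero : ∀ α, ∀ x ∈ U, ∑ i, c i * a i α x = 0) (φ : (Fin d → ℝ) → ℝ) :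
    ¬ LinearIndependent ℝ fun i (x : U) => pdoApply s (a i) φ x := by
  refine Fintype.not_linearIndependent_iff.mpr ⟨c, funext fun x => ?_, Function.ne_iff.mp hc⟩
  simp only [Finset.sum_apply, Pi.smul_apply, smul_eq_mul, Pi.zero_apply, sum_mul_pdoApply]
  simp [pdoApply, hzero _ x x.2]

/-- **Theorem 1 (polynomial test functions).**
Linear partial differential operators `L_1, …, L_r` with continuous coefficients on an
open set `U ⊆ ℝ^d` satisfy: `L_1 p, …, L_r p` are linearly dependent in `C(U)` for every
real polynomial `p ∈ ℝ[x_1, …, x_d]` iff `L_1, …, L_r` are linearly dependent. -/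
theorem local_linear_dependence_of_pdos_polynomials
    (d : ℕ) (hd : 1 ≤ d) (U : Set (Fin d → ℝ)) (hU : IsOpen U)
    (r s : ℕ)
    (a : Fin r → (Fin d → ℕ) → (Fin d → ℝ) → ℝ)
    (hcont : ∀ i α, ContinuousOn (a i α) U)
    (hdeg : ∀ i α, s < ∑ j, α j → a i α = 0) :
    (∀ p : MvPolynomial (Fin d) ℝ,
        ¬ LinearIndependent ℝ
          (fun i : Fin r => fun x : U =>
            pdoApply s (a i) (fun y => MvPolynomial.eval y p) x)) ↔
      ∃ c : Fin r → ℝ, c ≠ 0 ∧ ∀ α : Fin d → ℕ, ∀ x ∈ U, ∑ i, c i * a i α x = 0 := by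
  refine ⟨fun hdep => ?_, fun ⟨c, hc, hzero⟩ p => not_linearIndependent_pdoApply hc hzero _⟩
  by_contra hindep
  have hli : LinearIndependent ℝ fun i (t : (Fin d → ℕ) × U) => a i t.1 t.2 := by
    refine Fintype.linearIndependent_iff.mpr fun c hc => ?_
    by_contra! hne
    exact hindep ⟨c, Function.ne_iff.mpr hne, fun α x hx => by
      simpa using congrFun hc (α, ⟨x, hx⟩)⟩
  obtain ⟨p, hp⟩ := exists_linearIndependent_pdoApply_eval hd hU hcont hdeg hli
  exact hdep p hp
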